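/- Let T_n(z) be the 2×2 matrix with entries T_n(1,1) = z + \bar{α}_n α_{n-1}, T_n(1,2) = \bar{α}_n/b_n, T_n(2,1) = α_{n-1} b_n, T_n(2,2) = 1. Then the Szegő recurrences imply the matrix identity Y_{n+1}(z) diag(1, z) = T_n(z) Y_n(z), where Y_n is the Riemann–Hilbert solution matrix built from Φ_n, G_n, Φ^*_{n-1}, G^*_{n-1}. -/

import Mathlib

open Complex Matrix

/-!
Write a column of `Y_n` as `(x, -b_{n-1} y)`. Once `Φ_{n-1}` (resp. `G_{n-1}`) is eliminated through
`Φ_n = z Φ_{n-1} - ᾱ_{n-1} Φ*_{n-1}`, the Szegő recursions say that the first column of `Y_{n+1}`,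
and `z` times its second column, are `(x', -b_n y')` with `y' = (1 - |α_{n-1}|²) y - α_{n-1} x` and
`x' = z x - ᾱ_n y'`. As `b_{n-1} = (1 - |α_{n-1}|²) b_n`, this map is multiplication by `T_n(z)`.
-/

theorem szego_star_update_eq (a u w : ℂ) :
    w - a * u = (1 - ((‖a‖ : ℝ) : ℂ) ^ 2) * w - a * (u - starRingEnd ℂ a * w) := by
  rw [← mul_conj']
  ring

-- The two entries of `T *ᵥ ![x, -b₀ * y]`, written exactly as `mul_fin_two` produces them.
theorem transfer_column {K : Type*} [Field K] {z a c r b₀ b₁ x y s t : K} (hb₁ : b₁ ≠ 0)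
    (hb : b₀ = r * b₁) (hs : s = r * y - a * x) (ht : t = z * x - c * s) :
    t = (z + c * a) * x + c / b₁ * (-b₀ * y) ∧ -b₁ * s = a * b₁ * x + 1 * (-b₀ * y) := by
  constructor
  · rw [ht, hs, hb]
    field_simp
    ring
  · rw [hs, hb]
    ring

/-- Let `T_n(z)` be the 2×2 matrix with entries
`T_n(1,1) = z + conj(α_n) α_{n-1}`, `T_n(1,2) = conj(α_n)/b_n`,
`T_n(2,1) = α_{n-1} b_n`, `T_n(2,2) = 1`.  Then the Szegő recurrences imply the matrix
identity `Y_{n+1}(z) diag(1, z) = T_n(z) Y_n(z)`, where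
`Y_m(z) = [[Φ_m(z), G_m(z)], [−b_{m-1}Φ*_{m-1}(z), −b_{m-1}G*_{m-1}(z)]]`.
(Reindexed: stated for `Y_{n+2}` and `Y_{n+1}`, i.e. for all `n ≥ 1`.) -/
theorem stmt11
    (Φ Φs G Gs : ℕ → ℂ → ℂ) (α : ℕ → ℂ) (b : ℕ → ℂ)
    (Y : ℕ → ℂ → Matrix (Fin 2) (Fin 2) ℂ)
    (hbne : ∀ n, b n ≠ 0)
    (hb : ∀ n, b n = (1 - ((‖α n‖ : ℝ) : ℂ) ^ 2) * b (n + 1))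
    (hrec : ∀ n (z : ℂ), Φ (n + 1) z = z * Φ n z - (starRingEnd ℂ) (α n) * Φs n z)
    (hrecs : ∀ n (z : ℂ), Φs (n + 1) z = Φs n z - α n * z * Φ n z)
    (hGrec : ∀ n (z : ℂ), G (n + 1) z = G n z - (starRingEnd ℂ) (α n) * Gs n z)
    (hGsrec : ∀ n (z : ℂ), z * Gs (n + 1) z = Gs n z - α n * G n z)
    (hY : ∀ n (z : ℂ), Y (n + 1) z =
      !![Φ (n + 1) z, G (n + 1) z; -(b n) * Φs n z, -(b n) * Gs n z]) :
    ∀ n (z : ℂ),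
      Y (n + 2) z * !![(1 : ℂ), 0; 0, z] =
        !![z + (starRingEnd ℂ) (α (n + 1)) * α n, (starRingEnd ℂ) (α (n + 1)) / b (n + 1);
           α n * b (n + 1), 1] * Y (n + 1) z := by
  intro n z
  have hΦs : Φs (n + 1) z = (1 - ((‖α n‖ : ℝ) : ℂ) ^ 2) * Φs n z - α n * Φ (n + 1) z := by
    rw [hrecs, hrec, mul_assoc, szego_star_update_eq]
  have hGs : Gs (n + 1) z * z = (1 - ((‖α n‖ : ℝ) : ℂ) ^ 2) * Gs n z - α n * G (n + 1) z := by
    rw [mul_comm, hGsrec, hGrec, szego_star_update_eq]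
  have hG : G (n + 2) z * z = z * G (n + 1) z - starRingEnd ℂ (α (n + 1)) * (Gs (n + 1) z * z) := by
    rw [hGrec]
    ring
  obtain ⟨hΦ₁, hΦ₂⟩ := transfer_column (hbne (n + 1)) (hb n) hΦs (hrec (n + 1) z)
  obtain ⟨hG₁, hG₂⟩ := transfer_column (hbne (n + 1)) (hb n) hGs hG
  rw [hY (n + 1) z, hY n z, mul_fin_two, mul_fin_two, ← hΦ₁, ← hΦ₂, ← hG₁, ← hG₂]
  simp only [mul_one, mul_zero, add_zero, zero_add, mul_assoc]
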